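/- (Lemma 3 of the appendix.) Consider the maximal-information structure and fix a team strategy (f,g). Then for any adversary strategy gᵃ and any realization (x_{1:t},u_{1:t},m_t) of (X_{1:t},U_{1:t},M_t), the almost-sure identities P^{f,g,gᵃ}[X_{1:t}=x_{1:t},U_{1:t−1}=u_{1:t−1},M_t=m_t | Iᵃ_t] = Ψ_t(Iᵃ_t; x_{1:t},u_{1:t−1},m_t) and P^{f,g,gᵃ}[X_{1:t}=x_{1:t},U_{1:t}=u_{1:t} | Iᵃ_{t⁺}] = Ψ_{t⁺}(Iᵃ_{t⁺}; x_{1:t},u_{1:t}) hold; in particular, these conditional distributions do not depend on the adversary's strategy gᵃ. -/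

import Mathlib

/-!
Under any adversary strategy the density of a trajectory is a product of one conditional kernel
per coordinate, the coordinates being ordered by time and, within a time step, in the order in
which they are generated. The probability of an event determined by the coordinates before `Uᵃ_t`
does not change when the kernels from `Uᵃ_t` on are replaced by any others: they can be summed
out one at a time, the latest first. On the event `Iᵃ_t = ι` (or `Iᵃ_{t⁺} = ι`) the adversary's
kernels before time `t` are constant, equal to the probability `w` that `gᵃ` plays the actions
recorded in `ι`. Hence `P^{gᵃ}(F ∩ {Iᵃ_t = ι}) = w * P^{hᵃ}(F ∩ {Iᵃ_t = ι})` for every event `F`,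
where `hᵃ` is the open-loop strategy of `ι`, and `w` cancels in the conditional probability.
-/

open Finset
open scoped Classical BigOperators

namespace TA

/-- The primitive model of the team-vs-adversary control system (Section II of the paper):
finite horizon `T`, finite global/local state spaces, finite action spaces, independent
initial states, controlled Markovian dynamics given by transition kernels, an erasure
parameter `pe`, an observation kernel `obs` for the adversary's observation `Y_t`,
a stage cost `cost` and a communication cost `commCost`. -/
structure Model where
  T : ℕ
  hT : 0 < T
  X0 : Type
  X1 : Type
  X2 : Type
  U1 : Type
  U2 : Type
  Ua : Type
  Y : Type
  [fX0 : Fintype X0]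
  [fX1 : Fintype X1]
  [fX2 : Fintype X2]
  [fU1 : Fintype U1]
  [fU2 : Fintype U2]
  [fUa : Fintype Ua]
  [fY : Fintype Y]
  [nX0 : Nonempty X0]
  [nX1 : Nonempty X1]
  [nX2 : Nonempty X2]
  [nU1 : Nonempty U1]
  [nU2 : Nonempty U2]
  [nUa : Nonempty Ua]
  [nY : Nonempty Y]
  init0 : X0 → ℝ
  init1 : X1 → ℝ
  init2 : X2 → ℝ
  trans0 : X0 → Ua → X0 → ℝ
  trans1 : X0 → X1 → U1 → X1 → ℝ
  trans2 : X0 → X2 → U2 → X2 → ℝ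
  pe : X0 → ℝ
  obs : Option (X1 × X2) → Bool × Bool → X0 → Y → ℝ
  cost : ℕ → X0 → X1 × X2 → U1 × U2 → Ua → ℝ
  commCost : X0 → X1 × X2 → ℝ
  init0_nonneg : ∀ x, 0 ≤ init0 x
  init1_nonneg : ∀ x, 0 ≤ init1 x
  init2_nonneg : ∀ x, 0 ≤ init2 x
  init0_sum : ∑ x, init0 x = 1
  init1_sum : ∑ x, init1 x = 1
  init2_sum : ∑ x, init2 x = 1
  trans0_nonneg : ∀ x u x', 0 ≤ trans0 x u x'
  trans1_nonneg : ∀ x0 x u x', 0 ≤ trans1 x0 x u x'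
  trans2_nonneg : ∀ x0 x u x', 0 ≤ trans2 x0 x u x'
  trans0_sum : ∀ x u, ∑ x', trans0 x u x' = 1
  trans1_sum : ∀ x0 x u, ∑ x', trans1 x0 x u x' = 1
  trans2_sum : ∀ x0 x u, ∑ x', trans2 x0 x u x' = 1
  pe_nonneg : ∀ x, 0 ≤ pe x
  pe_le_one : ∀ x, pe x ≤ 1
  obs_nonneg : ∀ z m x y, 0 ≤ obs z m x y
  obs_sum : ∀ z m x, ∑ y, obs z m x y = 1

attribute [instance] Model.fX0 Model.fX1 Model.fX2 Model.fU1 Model.fU2 Model.fUa Model.fY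
attribute [instance] Model.nX0 Model.nX1 Model.nX2 Model.nU1 Model.nU2 Model.nUa Model.nY

/-- A full system trajectory over the horizon: global states, local states, communication
decisions, messages over the erasure channel, adversary observations, and all actions. -/
abbrev Traj (M : Model) :=
  (Fin M.T → M.X0) × (Fin M.T → M.X1) × (Fin M.T → M.X2) ×
  (Fin M.T → Bool) × (Fin M.T → Bool) × (Fin M.T → Option (M.X1 × M.X2)) ×
  (Fin M.T → M.Y) × (Fin M.T → M.U1) × (Fin M.T → M.U2) × (Fin M.T → M.Ua)

def idx (M : Model) (t : ℕ) : Fin M.T := if h : t < M.T then ⟨t, h⟩ else ⟨0, M.hT⟩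

variable {M : Model}

def X0v (ω : Traj M) (t : ℕ) : M.X0 := ω.1 (idx M t)
def X1v (ω : Traj M) (t : ℕ) : M.X1 := ω.2.1 (idx M t)
def X2v (ω : Traj M) (t : ℕ) : M.X2 := ω.2.2.1 (idx M t)
def M1v (ω : Traj M) (t : ℕ) : Bool := ω.2.2.2.1 (idx M t)
def M2v (ω : Traj M) (t : ℕ) : Bool := ω.2.2.2.2.1 (idx M t)
def Zv (ω : Traj M) (t : ℕ) : Option (M.X1 × M.X2) := ω.2.2.2.2.2.1 (idx M t)
def Yv (ω : Traj M) (t : ℕ) : M.Y := ω.2.2.2.2.2.2.1 (idx M t)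
def U1v (ω : Traj M) (t : ℕ) : M.U1 := ω.2.2.2.2.2.2.2.1 (idx M t)
def U2v (ω : Traj M) (t : ℕ) : M.U2 := ω.2.2.2.2.2.2.2.2.1 (idx M t)
def UAv (ω : Traj M) (t : ℕ) : M.Ua := ω.2.2.2.2.2.2.2.2.2 (idx M t)
def Mv (ω : Traj M) (t : ℕ) : Bool × Bool := (M1v ω t, M2v ω t)

/-- The list of values `f 0, f 1, …, f (t-1)` (a "prefix" of a stochastic process). -/
def pre {α : Type _} (t : ℕ) (f : ℕ → α) : List α := (List.range t).map f

/-- Realizations of agent 1's information `I¹_t` (resp. `I¹_{t⁺}`):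
`(X⁰_{1:t}, X¹_{1:t}, U¹_{1:t-1}, M_{1:t-1}, Z^er_{1:t-1}, Uᵃ_{1:t-1}, Y_{1:t-1})`. -/
abbrev Hist1 (M : Model) :=
  List M.X0 × List M.X1 × List M.U1 × List (Bool × Bool) ×
  List (Option (M.X1 × M.X2)) × List M.Ua × List M.Y

/-- Realizations of agent 2's information `I²_t` (resp. `I²_{t⁺}`). -/
abbrev Hist2 (M : Model) :=
  List M.X0 × List M.X2 × List M.U2 × List (Bool × Bool) ×
  List (Option (M.X1 × M.X2)) × List M.Ua × List M.Y

/-- Realizations of the team's common information `C^team_t = I¹_t ∩ I²_t`. -/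
abbrev HistC (M : Model) :=
  List M.X0 × List (Bool × Bool) × List (Option (M.X1 × M.X2)) × List M.Ua × List M.Y

def info1 (t : ℕ) (ω : Traj M) : Hist1 M :=
  (pre (t+1) (X0v ω), pre (t+1) (X1v ω), pre t (U1v ω), pre t (Mv ω),
   pre t (Zv ω), pre t (UAv ω), pre t (Yv ω))

def info1p (t : ℕ) (ω : Traj M) : Hist1 M :=
  (pre (t+1) (X0v ω), pre (t+1) (X1v ω), pre t (U1v ω), pre (t+1) (Mv ω),
   pre (t+1) (Zv ω), pre t (UAv ω), pre (t+1) (Yv ω))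

def info2 (t : ℕ) (ω : Traj M) : Hist2 M :=
  (pre (t+1) (X0v ω), pre (t+1) (X2v ω), pre t (U2v ω), pre t (Mv ω),
   pre t (Zv ω), pre t (UAv ω), pre t (Yv ω))

def info2p (t : ℕ) (ω : Traj M) : Hist2 M :=
  (pre (t+1) (X0v ω), pre (t+1) (X2v ω), pre t (U2v ω), pre (t+1) (Mv ω),
   pre (t+1) (Zv ω), pre t (UAv ω), pre (t+1) (Yv ω))

/-- The team's common information `C^team_t` before communication at time `t`. -/
def teamCom (t : ℕ) (ω : Traj M) : HistC M :=
  (pre (t+1) (X0v ω), pre t (Mv ω), pre t (Zv ω), pre t (UAv ω), pre t (Yv ω))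

/-- The team's common information `C^team_{t⁺}` after communication at time `t`. -/
def teamComP (t : ℕ) (ω : Traj M) : HistC M :=
  (pre (t+1) (X0v ω), pre (t+1) (Mv ω), pre (t+1) (Zv ω), pre t (UAv ω), pre (t+1) (Yv ω))

/-- A behavioral communication/control strategy pair `(f,g) = (f¹,f²,g¹,g²)` for the team:
`fⁱ_t` selects a distribution on `{0,1}` for `Mⁱ_t` given `Iⁱ_t`; `gⁱ_t` selects a
distribution on `𝒰ⁱ` for `Uⁱ_t` given `Iⁱ_{t⁺}`. -/
structure TeamStrategy (M : Model) where
  f1 : ℕ → Hist1 M → Bool → ℝ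
  f2 : ℕ → Hist2 M → Bool → ℝ
  g1 : ℕ → Hist1 M → M.U1 → ℝ
  g2 : ℕ → Hist2 M → M.U2 → ℝ
  f1_nonneg : ∀ t h m, 0 ≤ f1 t h m
  f2_nonneg : ∀ t h m, 0 ≤ f2 t h m
  g1_nonneg : ∀ t h u, 0 ≤ g1 t h u
  g2_nonneg : ∀ t h u, 0 ≤ g2 t h u
  f1_sum : ∀ t h, ∑ m, f1 t h m = 1
  f2_sum : ∀ t h, ∑ m, f2 t h m = 1
  g1_sum : ∀ t h, ∑ u, g1 t h u = 1
  g2_sum : ∀ t h, ∑ u, g2 t h u = 1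

/-- A behavioral strategy for the adversary: `gᵃ_t` selects a distribution on `𝒰ᵃ`
given the adversary's information `Iᵃ_{t⁺}`, whose realizations live in `A`. -/
structure AdvStrategy (M : Model) (A : Type _) where
  ga : ℕ → A → M.Ua → ℝ
  ga_nonneg : ∀ t a u, 0 ≤ ga t a u
  ga_sum : ∀ t a, ∑ u, ga t a u = 1

/-- The kernel of the erasure channel: if `M^or_t = 0`, no message; if `M^or_t = 1`, the
joint local state is delivered w.p. `1 - pe(x⁰)` and erased w.p. `pe(x⁰)`. -/
noncomputable def zKer (M : Model) (x0 : M.X0) (m : Bool × Bool) (x : M.X1 × M.X2)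
    (z : Option (M.X1 × M.X2)) : ℝ :=
  if m = (false, false) then (if z = none then 1 else 0)
  else
    match z with
    | none => M.pe x0
    | some x' => if x' = x then 1 - M.pe x0 else 0

/-- The probability of a full trajectory under the team strategy `σ`, the adversary
strategy `γ`, where `iap t ω` is the realization of the adversary's information
`Iᵃ_{t⁺}` along `ω` (this parametrizes the adversary's information structure). -/
noncomputable def prob (σ : TeamStrategy M) {A : Type _} (γ : AdvStrategy M A)
    (iap : ℕ → Traj M → A) (ω : Traj M) : ℝ :=
  M.init0 (X0v ω 0) * M.init1 (X1v ω 0) * M.init2 (X2v ω 0) *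
  (∏ t ∈ Finset.range M.T,
    (σ.f1 t (info1 t ω) (M1v ω t) * σ.f2 t (info2 t ω) (M2v ω t) *
     zKer M (X0v ω t) (Mv ω t) (X1v ω t, X2v ω t) (Zv ω t) *
     M.obs (Zv ω t) (Mv ω t) (X0v ω t) (Yv ω t) *
     σ.g1 t (info1p t ω) (U1v ω t) * σ.g2 t (info2p t ω) (U2v ω t) *
     γ.ga t (iap t ω) (UAv ω t))) *
  (∏ t ∈ Finset.range (M.T - 1),
    (M.trans0 (X0v ω t) (UAv ω t) (X0v ω (t+1)) *
     M.trans1 (X0v ω t) (X1v ω t) (U1v ω t) (X1v ω (t+1)) *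
     M.trans2 (X0v ω t) (X2v ω t) (U2v ω t) (X2v ω (t+1))))

/-- Probability of an event (a set of trajectories). -/
noncomputable def pr (σ : TeamStrategy M) {A : Type _} (γ : AdvStrategy M A)
    (iap : ℕ → Traj M → A) (E : Traj M → Prop) : ℝ :=
  ∑ ω : Traj M, if E ω then prob σ γ iap ω else 0

/-- Conditional probability `P(F | E)`. -/
noncomputable def cpr (σ : TeamStrategy M) {A : Type _} (γ : AdvStrategy M A)
    (iap : ℕ → Traj M → A) (E F : Traj M → Prop) : ℝ :=
  pr σ γ iap (fun ω => F ω ∧ E ω) / pr σ γ iap E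

/-- Total cost `Σ_t c_t(X⁰_t,X_t,U_t,Uᵃ_t) + ρ(X⁰_t,X_t) 1{M^or_t = 1}` along a trajectory. -/
noncomputable def totalCost (ω : Traj M) : ℝ :=
  ∑ t ∈ Finset.range M.T,
    (M.cost t (X0v ω t) (X1v ω t, X2v ω t) (U1v ω t, U2v ω t) (UAv ω t) +
     (if (M1v ω t || M2v ω t) then M.commCost (X0v ω t) (X1v ω t, X2v ω t) else 0))

/-- Expected total cost `J((f,g),gᵃ)`. -/
noncomputable def J (σ : TeamStrategy M) {A : Type _} (γ : AdvStrategy M A)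
    (iap : ℕ → Traj M → A) : ℝ :=
  ∑ ω : Traj M, prob σ γ iap ω * totalCost ω

end TA

namespace TA

/-- The open-loop adversary strategy that deterministically plays the given sequence of
actions (used to define strategy-independent conditional distributions). -/
noncomputable def openLoop (M : Model) (A : Type _) (us : List M.Ua) : AdvStrategy M A where
  ga := fun t _ u => if u = us.getD t (Classical.arbitrary M.Ua) then 1 else 0
  ga_nonneg := by
    intro t a u
    try dsimp only
    split <;> norm_num
  ga_sum := by
    intro t a
    simp

/-- The uniform density on the space of realizations `(x_{1:t}, u_{1:t-1}, m_t)`. -/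
noncomputable def unifComm (M : Model) (t : ℕ) : ℝ :=
  ((Fintype.card M.X1 * Fintype.card M.X2 : ℝ))⁻¹ ^ (t+1) *
  ((Fintype.card M.U1 * Fintype.card M.U2 : ℝ))⁻¹ ^ t * (4 : ℝ)⁻¹

/-- The uniform density on the space of realizations `(x_{1:t}, u_{1:t})`. -/
noncomputable def unifCtrl (M : Model) (t : ℕ) : ℝ :=
  ((Fintype.card M.X1 * Fintype.card M.X2 : ℝ))⁻¹ ^ (t+1) *
  ((Fintype.card M.U1 * Fintype.card M.U2 : ℝ))⁻¹ ^ (t+1)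

/-- In the maximal-information structure, `Iᵃ_t = I¹_t ∩ I²_t = C^team_t`; a realization
`ι` of `Iᵃ_t` contains the list `uᵃ_{1:t-1}` of past adversary actions, from which the
open-loop strategy `hᵃ` is built. -/
noncomputable def advOpen (M : Model) (ι : HistC M) : AdvStrategy M (HistC M) :=
  openLoop M (HistC M) ι.2.2.2.1

/-- `Ψ_t(ι; x_{1:t}, u_{1:t-1}, m_t)`: the conditional distribution of states, past team
actions and current communication decisions given `Iᵃ_t = ι`, computed under the team
strategy `σ` and the open-loop adversary strategy induced by `ι` (and set to the
uniform distribution when `ι` is infeasible). -/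
noncomputable def Psi {M : Model} (σ : TeamStrategy M) (t : ℕ) (ι : HistC M)
    (ξ1 : List M.X1) (ξ2 : List M.X2) (υ1 : List M.U1) (υ2 : List M.U2)
    (mt : Bool × Bool) : ℝ :=
  if 0 < pr σ (advOpen M ι) teamComP (fun ω => teamCom t ω = ι) then
    cpr σ (advOpen M ι) teamComP (fun ω => teamCom t ω = ι)
      (fun ω => pre (t+1) (X1v ω) = ξ1 ∧ pre (t+1) (X2v ω) = ξ2 ∧
                pre t (U1v ω) = υ1 ∧ pre t (U2v ω) = υ2 ∧ Mv ω t = mt)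
  else unifComm M t

/-- `Ψ_{t⁺}(ι; x_{1:t}, u_{1:t})`: the analogous conditional distribution given
`Iᵃ_{t⁺} = ι`. -/
noncomputable def PsiP {M : Model} (σ : TeamStrategy M) (t : ℕ) (ι : HistC M)
    (ξ1 : List M.X1) (ξ2 : List M.X2) (υ1 : List M.U1) (υ2 : List M.U2) : ℝ :=
  if 0 < pr σ (advOpen M ι) teamComP (fun ω => teamComP t ω = ι) then
    cpr σ (advOpen M ι) teamComP (fun ω => teamComP t ω = ι)
      (fun ω => pre (t+1) (X1v ω) = ξ1 ∧ pre (t+1) (X2v ω) = ξ2 ∧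
                pre (t+1) (U1v ω) = υ1 ∧ pre (t+1) (U2v ω) = υ2)
  else unifCtrl M t

end TA

open Function

section Marginal

variable {ι : Type*} [Fintype ι] [DecidableEq ι] {B : ι → Type*} [∀ i, Fintype (B i)]

theorem sum_sum_update_eq_card_mul_sum (i : ι) (F : (∀ j, B j) → ℝ) :
    ∑ x, ∑ b, F (update x i b) = Fintype.card (B i) * ∑ x, F x := by
  let e := Equiv.piSplitAt i B
  have hupd : ∀ a b r, update (e.symm (a, r)) i b = e.symm (b, r) := by
    intro a b r
    ext j
    by_cases h : j = i
    · subst h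
      simp [e, Equiv.piSplitAt]
    · simp [e, Equiv.piSplitAt, h]
  rw [← e.symm.sum_comp, ← e.symm.sum_comp, Fintype.sum_prod_type, Fintype.sum_prod_type]
  simp only [hupd, sum_const, card_univ, nsmul_eq_mul]
  rw [sum_comm]

theorem sum_mul_eq_inv_card_mul_sum [∀ i, Nonempty (B i)] {i : ι} {H K : (∀ j, B j) → ℝ}
    (hH : DependsOn H {i}ᶜ) (hK : ∀ x, ∑ b, K (update x i b) = 1) :
    ∑ x, H x * K x = (Fintype.card (B i) : ℝ)⁻¹ * ∑ x, H x := by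
  have hHi : ∀ x b, H (update x i b) = H x := fun x b => hH fun j hj => update_of_ne hj _ _
  have hcard : (Fintype.card (B i) : ℝ) ≠ 0 := Nat.cast_ne_zero.mpr Fintype.card_ne_zero
  rw [eq_inv_mul_iff_mul_eq₀ hcard, ← sum_sum_update_eq_card_mul_sum]
  simp only [hHi, ← mul_sum, hK, mul_one]

def IsKernelAt [LinearOrder ι] (i : ι) (k : (∀ j, B j) → ℝ) : Prop :=
  DependsOn k (Set.Iic i) ∧ ∀ x, ∑ b, k (update x i b) = 1

theorem sum_mul_prod_eq_prod_inv_card_mul_sum [LinearOrder ι] [∀ i, Nonempty (B i)]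
    (S : Finset ι) {g : (∀ i, B i) → ℝ} (hg : DependsOn g (↑S)ᶜ) {K : ι → (∀ i, B i) → ℝ}
    (hK : ∀ i ∈ S, IsKernelAt i (K i)) :
    ∑ x, g x * ∏ i ∈ S, K i x = (∏ i ∈ S, (Fintype.card (B i) : ℝ)⁻¹) * ∑ x, g x := by
  induction S using induction_on_max with
  | empty => simp
  | insert m S hlt ih =>
    have hm : m ∉ S := fun h => lt_irrefl m (hlt m h)
    have hrest : DependsOn (fun x => g x * ∏ i ∈ S, K i x) {m}ᶜ := by
      intro x y hxy
      have hgxy : g x = g y := hg fun j hj => hxy j fun h => hj (h ▸ mem_insert_self m S)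
      have hKxy : ∀ i ∈ S, K i x = K i y := fun i hi =>
        (hK i (mem_insert_of_mem hi)).1 fun j hj =>
          hxy j (ne_of_lt (lt_of_le_of_lt hj (hlt i hi)))
      simp only [hgxy, prod_congr rfl hKxy]
    have ih' := ih (hg.mono (Set.compl_subset_compl.mpr
      (coe_subset.mpr (subset_insert m S))))
      fun i hi => hK i (mem_insert_of_mem hi)
    simp only [prod_insert hm]
    calc ∑ x, g x * (K m x * ∏ i ∈ S, K i x)
        = ∑ x, (g x * ∏ i ∈ S, K i x) * K m x := by congr 1; ext x; ring
      _ = (Fintype.card (B m) : ℝ)⁻¹ * ∑ x, g x * ∏ i ∈ S, K i x :=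
          sum_mul_eq_inv_card_mul_sum hrest (hK m (mem_insert_self m S)).2
      _ = _ := by rw [ih', mul_assoc]

theorem sum_mul_prod_eq_of_eqOn_Iio [LinearOrder ι] [∀ i, Nonempty (B i)] (c : ι)
    {g : (∀ i, B i) → ℝ} (hg : DependsOn g (Set.Iio c)) {K K' : ι → (∀ i, B i) → ℝ}
    (hK : ∀ i, IsKernelAt i (K i)) (hK' : ∀ i, IsKernelAt i (K' i))
    (hKK' : ∀ i < c, K i = K' i) :
    ∑ x, g x * ∏ i, K i x = ∑ x, g x * ∏ i, K' i x := by
  have hmarg : ∀ K : ι → (∀ i, B i) → ℝ, (∀ i, IsKernelAt i (K i)) →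
      ∑ x, g x * ∏ i, K i x = (∏ i with ¬ i < c, (Fintype.card (B i) : ℝ)⁻¹) *
        ∑ x, g x * ∏ i with i < c, K i x := by
    intro K hK
    have hpast : DependsOn (fun x => g x * ∏ i with i < c, K i x)
        (↑(univ.filter (¬ · < c)))ᶜ := by
      intro x y hxy
      have hIio : ∀ j < c, x j = y j := fun j hj => hxy j (by simp [hj])
      simp only [hg hIio, prod_congr rfl fun i hi => (hK i).1 fun j hj =>
        hIio j (lt_of_le_of_lt hj (mem_filter.mp hi).2)]
    simp_rw [← prod_filter_mul_prod_filter_not univ (· < c), ← mul_assoc]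
    exact sum_mul_prod_eq_prod_inv_card_mul_sum _ hpast fun i _ => hK i
  have hpast : ∀ x, ∏ i with i < c, K i x = ∏ i with i < c, K' i x := fun x =>
    prod_congr rfl fun i hi => by rw [hKK' i (mem_filter.mp hi).2]
  simp only [hmarg K hK, hmarg K' hK', hpast]

end Marginal

namespace TA

variable {M : Model}

/-- `Var M c` is the type of the `c`-th variable of a time step, in the order
`X⁰, X¹, X², M¹, M², Z^er, Y, U¹, U², Uᵃ` in which they are generated. A trajectory is a function
of its coordinates `(s, c) : Coord M`, ordered lexicographically. -/
def Var (M : Model) : Fin 10 → Type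
  | 0 => M.X0 | 1 => M.X1 | 2 => M.X2 | 3 => Bool | 4 => Bool
  | 5 => Option (M.X1 × M.X2) | 6 => M.Y | 7 => M.U1 | 8 => M.U2 | 9 => M.Ua

instance instFintypeVar : (c : Fin 10) → Fintype (Var M c)
  | 0 | 1 | 2 | 3 | 4 | 5 | 6 | 7 | 8 | 9 => by unfold Var; infer_instance

instance instNonemptyVar : (c : Fin 10) → Nonempty (Var M c)
  | 0 | 1 | 2 | 3 | 4 | 5 | 6 | 7 | 8 | 9 => by unfold Var; infer_instance

abbrev Coord (M : Model) := Fin M.T ×ₗ Fin 10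

def equivPi : Traj M ≃ ∀ p : Coord M, Var M (ofLex p).2 where
  toFun ω p := match (ofLex p).2 with
    | 0 => ω.1 (ofLex p).1
    | 1 => ω.2.1 (ofLex p).1
    | 2 => ω.2.2.1 (ofLex p).1
    | 3 => ω.2.2.2.1 (ofLex p).1
    | 4 => ω.2.2.2.2.1 (ofLex p).1
    | 5 => ω.2.2.2.2.2.1 (ofLex p).1
    | 6 => ω.2.2.2.2.2.2.1 (ofLex p).1
    | 7 => ω.2.2.2.2.2.2.2.1 (ofLex p).1
    | 8 => ω.2.2.2.2.2.2.2.2.1 (ofLex p).1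
    | 9 => ω.2.2.2.2.2.2.2.2.2 (ofLex p).1
  invFun x := (fun s => x (toLex (s, 0)), fun s => x (toLex (s, 1)), fun s => x (toLex (s, 2)),
    fun s => x (toLex (s, 3)), fun s => x (toLex (s, 4)), fun s => x (toLex (s, 5)),
    fun s => x (toLex (s, 6)), fun s => x (toLex (s, 7)), fun s => x (toLex (s, 8)),
    fun s => x (toLex (s, 9)))
  left_inv ω := rfl
  right_inv x := by
    funext p
    rcases p with ⟨s, c⟩
    fin_cases c <;> rfl

def coord (M : Model) (r : ℕ) (c : Fin 10) : Coord M := toLex (idx M r, c)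

theorem coord_le_coord {r s : ℕ} {c c' : Fin 10} (hs : s < M.T) (h : r < s ∨ r = s ∧ c ≤ c') :
    coord M r c ≤ coord M s c' := by
  have hr : r < M.T := by omega
  simpa only [coord, idx, hr, hs, dite_true, Prod.Lex.toLex_le_toLex, Fin.mk_lt_mk,
    Fin.mk.injEq] using h

theorem coord_lt_coord {r s : ℕ} {c c' : Fin 10} (hs : s < M.T) (h : r < s ∨ r = s ∧ c < c') :
    coord M r c < coord M s c' := by
  have hr : r < M.T := by omega
  simpa only [coord, idx, hr, hs, dite_true, Prod.Lex.toLex_lt_toLex, Fin.mk_lt_mk,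
    Fin.mk.injEq] using h

theorem pre_congr {α : Type*} {n : ℕ} {f g : ℕ → α} (h : ∀ r < n, f r = g r) :
    pre n f = pre n g :=
  List.map_congr_left fun r hr => h r (List.mem_range.mp hr)

theorem pre_take {α : Type*} {f : ℕ → α} {k n : ℕ} (h : k ≤ n) : (pre n f).take k = pre k f := by
  rw [pre, ← List.map_take, List.take_range, min_eq_left h, pre]

theorem pre_getD {α : Type*} {f : ℕ → α} {s n : ℕ} (h : s < n) (d : α) :
    (pre n f).getD s d = f s := by
  simp [pre, List.getD_eq_getElem?_getD, h]

section Congr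

variable {x y : ∀ p : Coord M, Var M (ofLex p).2} {s : ℕ}

-- `X0v (equivPi.symm x) r`, …, `UAv (equivPi.symm x) r` unfold to `x (coord M r c)` for
-- `c = 0, …, 9`; the `exact`s below rely on this to match goals against these lemmas.
theorem apply_coord_eq_of_le {c₀ : Fin 10} (hs : s < M.T) (h : ∀ q ≤ coord M s c₀, x q = y q)
    {r : ℕ} {c : Fin 10} (hrc : r < s ∨ r = s ∧ c ≤ c₀) : x (coord M r c) = y (coord M r c) :=
  h _ (coord_le_coord hs hrc)

theorem update_coord_apply_of_lt (hs : s < M.T) {c c' : Fin 10} {r : ℕ}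
    (h : r < s ∨ r = s ∧ c' < c) (b : Var M c) :
    update x (coord M s c) b (coord M r c') = x (coord M r c') :=
  update_of_ne (ne_of_lt (coord_lt_coord hs h)) _ _

theorem update_coord_eqOn_Iic (hs : s < M.T) {c c' : Fin 10} (h : c' < c) (b : Var M c) :
    ∀ q ≤ coord M s c', update x (coord M s c) b q = x q := fun _ hq =>
  update_of_ne (ne_of_lt (lt_of_le_of_lt hq (coord_lt_coord hs (Or.inr ⟨rfl, h⟩)))) _ _

theorem teamCom_congr (hs : s < M.T) (h : ∀ q ≤ coord M s 0, x q = y q) :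
    teamCom s (equivPi.symm x) = teamCom s (equivPi.symm y) := by
  simp only [teamCom, Prod.mk.injEq]
  refine ⟨?_, ?_, ?_, ?_, ?_⟩ <;> refine pre_congr fun r hr => ?_
  all_goals first
    | exact Prod.ext (apply_coord_eq_of_le hs h (by omega)) (apply_coord_eq_of_le hs h (by omega))
    | exact apply_coord_eq_of_le hs h (by omega)

theorem teamComP_congr (hs : s < M.T) (h : ∀ q ≤ coord M s 6, x q = y q) :
    teamComP s (equivPi.symm x) = teamComP s (equivPi.symm y) := by
  simp only [teamComP, Prod.mk.injEq]
  refine ⟨?_, ?_, ?_, ?_, ?_⟩ <;> refine pre_congr fun r hr => ?_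
  all_goals first
    | exact Prod.ext (apply_coord_eq_of_le hs h (by omega)) (apply_coord_eq_of_le hs h (by omega))
    | exact apply_coord_eq_of_le hs h (by omega)

theorem info1_congr (hs : s < M.T) (h : ∀ q ≤ coord M s 1, x q = y q) :
    info1 s (equivPi.symm x) = info1 s (equivPi.symm y) := by
  simp only [info1, Prod.mk.injEq]
  refine ⟨?_, ?_, ?_, ?_, ?_, ?_, ?_⟩ <;> refine pre_congr fun r hr => ?_
  all_goals first
    | exact Prod.ext (apply_coord_eq_of_le hs h (by omega)) (apply_coord_eq_of_le hs h (by omega))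
    | exact apply_coord_eq_of_le hs h (by omega)

theorem info2_congr (hs : s < M.T) (h : ∀ q ≤ coord M s 2, x q = y q) :
    info2 s (equivPi.symm x) = info2 s (equivPi.symm y) := by
  simp only [info2, Prod.mk.injEq]
  refine ⟨?_, ?_, ?_, ?_, ?_, ?_, ?_⟩ <;> refine pre_congr fun r hr => ?_
  all_goals first
    | exact Prod.ext (apply_coord_eq_of_le hs h (by omega)) (apply_coord_eq_of_le hs h (by omega))
    | exact apply_coord_eq_of_le hs h (by omega)

theorem info1p_congr (hs : s < M.T) (h : ∀ q ≤ coord M s 6, x q = y q) :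
    info1p s (equivPi.symm x) = info1p s (equivPi.symm y) := by
  simp only [info1p, Prod.mk.injEq]
  refine ⟨?_, ?_, ?_, ?_, ?_, ?_, ?_⟩ <;> refine pre_congr fun r hr => ?_
  all_goals first
    | exact Prod.ext (apply_coord_eq_of_le hs h (by omega)) (apply_coord_eq_of_le hs h (by omega))
    | exact apply_coord_eq_of_le hs h (by omega)

theorem info2p_congr (hs : s < M.T) (h : ∀ q ≤ coord M s 6, x q = y q) :
    info2p s (equivPi.symm x) = info2p s (equivPi.symm y) := by
  simp only [info2p, Prod.mk.injEq]
  refine ⟨?_, ?_, ?_, ?_, ?_, ?_, ?_⟩ <;> refine pre_congr fun r hr => ?_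
  all_goals first
    | exact Prod.ext (apply_coord_eq_of_le hs h (by omega)) (apply_coord_eq_of_le hs h (by omega))
    | exact apply_coord_eq_of_le hs h (by omega)

end Congr

def IsNonanticipative {A : Type _} (iap : ℕ → Traj M → A) : Prop :=
  ∀ s < M.T, DependsOn (iap s ∘ equivPi.symm) (Set.Iio (coord M s 9))

theorem isNonanticipative_teamComP : IsNonanticipative (teamComP (M := M)) :=
  fun s hs _ _ h =>
    teamComP_congr hs fun q hq => h q (lt_of_le_of_lt hq (coord_lt_coord hs (by omega)))

noncomputable def factor (σ : TeamStrategy M) {A : Type _} (γ : AdvStrategy M A)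
    (iap : ℕ → Traj M → A) : ℕ → Fin 10 → Traj M → ℝ
  | 0, 0, ω => M.init0 (X0v ω 0)
  | s + 1, 0, ω => M.trans0 (X0v ω s) (UAv ω s) (X0v ω (s + 1))
  | 0, 1, ω => M.init1 (X1v ω 0)
  | s + 1, 1, ω => M.trans1 (X0v ω s) (X1v ω s) (U1v ω s) (X1v ω (s + 1))
  | 0, 2, ω => M.init2 (X2v ω 0)
  | s + 1, 2, ω => M.trans2 (X0v ω s) (X2v ω s) (U2v ω s) (X2v ω (s + 1))
  | s, 3, ω => σ.f1 s (info1 s ω) (M1v ω s)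
  | s, 4, ω => σ.f2 s (info2 s ω) (M2v ω s)
  | s, 5, ω => zKer M (X0v ω s) (Mv ω s) (X1v ω s, X2v ω s) (Zv ω s)
  | s, 6, ω => M.obs (Zv ω s) (Mv ω s) (X0v ω s) (Yv ω s)
  | s, 7, ω => σ.g1 s (info1p s ω) (U1v ω s)
  | s, 8, ω => σ.g2 s (info2p s ω) (U2v ω s)
  | s, 9, ω => γ.ga s (iap s ω) (UAv ω s)

theorem prob_eq_prod_factor (σ : TeamStrategy M) {A : Type _} (γ : AdvStrategy M A)
    (iap : ℕ → Traj M → A) (ω : Traj M) :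
    prob σ γ iap ω = ∏ p : Coord M, factor σ γ iap (ofLex p).1 (ofLex p).2 ω := by
  obtain ⟨n, hn⟩ : ∃ n, M.T = n + 1 := ⟨M.T - 1, by have := M.hT; omega⟩
  have hrange : ∀ c, ∏ s : Fin M.T, factor σ γ iap s c ω = ∏ s ∈ range M.T, factor σ γ iap s c ω :=
    fun c => Fin.prod_univ_eq_prod_range (fun s => factor σ γ iap s c ω) M.T
  rw [← toLex.prod_comp, Fintype.prod_prod_type, Finset.prod_comm]
  simp only [ofLex_toLex, Fin.prod_univ_succ, Fin.prod_univ_zero, Fin.succ_zero_eq_one,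
    Fin.reduceSucc, mul_one, hrange]
  simp only [prob, prod_mul_distrib, hn, Nat.add_sub_cancel]
  rw [prod_range_succ' (fun s => factor σ γ iap s 0 ω),
    prod_range_succ' (fun s => factor σ γ iap s 1 ω),
    prod_range_succ' (fun s => factor σ γ iap s 2 ω)]
  simp only [factor]
  ring

theorem zKer_sum (x0 : M.X0) (m : Bool × Bool) (x : M.X1 × M.X2) :
    ∑ z, zKer M x0 m x z = 1 := by
  by_cases hm : m = (false, false) <;> simp [zKer, hm, Fintype.sum_option]

section Kernel

variable (σ : TeamStrategy M) {A : Type _} (γ : AdvStrategy M A) {iap : ℕ → Traj M → A}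
  {s : ℕ}

theorem dependsOn_factor (hiap : IsNonanticipative iap) (hs : s < M.T) (c : Fin 10) :
    DependsOn (factor σ γ iap s c ∘ equivPi.symm) (Set.Iic (coord M s c)) := by
  intro x y h
  simp only [comp_apply]
  have hle : ∀ r c', r < s ∨ r = s ∧ c' ≤ c → x (coord M r c') = y (coord M r c') :=
    fun r c' hrc => h _ (coord_le_coord hs hrc)
  have hbelow : ∀ c', c' ≤ c → ∀ q ≤ coord M s c', x q = y q :=
    fun c' hc' q hq => h q (hq.trans (coord_le_coord hs (Or.inr ⟨rfl, hc'⟩)))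
  fin_cases c <;> simp only [Fin.reduceFinMk, Fin.zero_eta, Fin.mk_one] at hle hbelow <;>
    rcases s with _ | s <;> simp only [factor, Nat.zero_eq, Nat.succ_eq_add_one] <;> congr 1
  all_goals first
    | exact hle _ _ (by omega)
    | exact Prod.ext (hle _ _ (by omega)) (hle _ _ (by omega))
    | exact info1_congr hs (hbelow _ (by decide))
    | exact info2_congr hs (hbelow _ (by decide))
    | exact info1p_congr hs (hbelow _ (by decide))
    | exact info2p_congr hs (hbelow _ (by decide))
    | exact hiap _ hs fun q hq => h q (Set.mem_Iic.mpr (le_of_lt (Set.mem_Iio.mp hq)))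

theorem sum_factor_update_of_le_two (hs : s < M.T) {c : Fin 10} (hc : c ≤ 2)
    (x : ∀ p : Coord M, Var M (ofLex p).2) :
    ∑ b : Var M c, factor σ γ iap s c (equivPi.symm (update x (coord M s c) b)) = 1 := by
  fin_cases c <;> simp only [Fin.reduceFinMk, Fin.zero_eta, Fin.mk_one] at hc ⊢ <;>
    try exact absurd hc (by decide)
  all_goals rcases s with _ | s <;> simp only [factor]
  · exact (sum_congr rfl fun b _ => congrArg M.init0 (update_self (coord M 0 0) b x)).trans
      M.init0_sum
  · refine (sum_congr rfl fun b _ => ?_).trans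
      (M.trans0_sum (X0v (equivPi.symm x) s) (UAv (equivPi.symm x) s))
    congr 1
    exacts [update_coord_apply_of_lt hs (by omega) b, update_coord_apply_of_lt hs (by omega) b,
      update_self _ _ _]
  · exact (sum_congr rfl fun b _ => congrArg M.init1 (update_self (coord M 0 1) b x)).trans
      M.init1_sum
  · refine (sum_congr rfl fun b _ => ?_).trans
      (M.trans1_sum (X0v (equivPi.symm x) s) (X1v (equivPi.symm x) s) (U1v (equivPi.symm x) s))
    congr 1
    exacts [update_coord_apply_of_lt hs (by omega) b, update_coord_apply_of_lt hs (by omega) b,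
      update_coord_apply_of_lt hs (by omega) b, update_self _ _ _]
  · exact (sum_congr rfl fun b _ => congrArg M.init2 (update_self (coord M 0 2) b x)).trans
      M.init2_sum
  · refine (sum_congr rfl fun b _ => ?_).trans
      (M.trans2_sum (X0v (equivPi.symm x) s) (X2v (equivPi.symm x) s) (U2v (equivPi.symm x) s))
    congr 1
    exacts [update_coord_apply_of_lt hs (by omega) b, update_coord_apply_of_lt hs (by omega) b,
      update_coord_apply_of_lt hs (by omega) b, update_self _ _ _]

theorem sum_factor_update_of_two_lt (hiap : IsNonanticipative iap) (hs : s < M.T) {c : Fin 10}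
    (hc : 2 < c) (x : ∀ p : Coord M, Var M (ofLex p).2) :
    ∑ b : Var M c, factor σ γ iap s c (equivPi.symm (update x (coord M s c) b)) = 1 := by
  fin_cases c <;> simp only [Fin.reduceFinMk, Fin.zero_eta, Fin.mk_one, factor] at hc ⊢ <;>
    try exact absurd hc (by decide)
  · refine (sum_congr rfl fun b _ => ?_).trans (σ.f1_sum s (info1 s (equivPi.symm x)))
    congr 1
    exacts [info1_congr hs (update_coord_eqOn_Iic hs (by decide) b), update_self _ _ _]
  · refine (sum_congr rfl fun b _ => ?_).trans (σ.f2_sum s (info2 s (equivPi.symm x)))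
    congr 1
    exacts [info2_congr hs (update_coord_eqOn_Iic hs (by decide) b), update_self _ _ _]
  · refine (sum_congr rfl fun b _ => ?_).trans (zKer_sum (X0v (equivPi.symm x) s)
      (Mv (equivPi.symm x) s) (X1v (equivPi.symm x) s, X2v (equivPi.symm x) s))
    congr 1
    exacts [update_coord_apply_of_lt hs (by omega) b,
      Prod.ext (update_coord_apply_of_lt hs (by omega) b)
        (update_coord_apply_of_lt hs (by omega) b),
      Prod.ext (update_coord_apply_of_lt hs (by omega) b)
        (update_coord_apply_of_lt hs (by omega) b),
      update_self _ _ _]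
  · refine (sum_congr rfl fun b _ => ?_).trans
      (M.obs_sum (Zv (equivPi.symm x) s) (Mv (equivPi.symm x) s) (X0v (equivPi.symm x) s))
    congr 1
    exacts [update_coord_apply_of_lt hs (by omega) b,
      Prod.ext (update_coord_apply_of_lt hs (by omega) b)
        (update_coord_apply_of_lt hs (by omega) b),
      update_coord_apply_of_lt hs (by omega) b, update_self _ _ _]
  · refine (sum_congr rfl fun b _ => ?_).trans (σ.g1_sum s (info1p s (equivPi.symm x)))
    congr 1
    exacts [info1p_congr hs (update_coord_eqOn_Iic hs (by decide) b), update_self _ _ _]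
  · refine (sum_congr rfl fun b _ => ?_).trans (σ.g2_sum s (info2p s (equivPi.symm x)))
    congr 1
    exacts [info2p_congr hs (update_coord_eqOn_Iic hs (by decide) b), update_self _ _ _]
  · refine (sum_congr rfl fun b _ => ?_).trans (γ.ga_sum s (iap s (equivPi.symm x)))
    congr 1
    exacts [hiap s hs fun q hq => update_of_ne (ne_of_lt hq) _ _, update_self _ _ _]

theorem isKernelAt_factor (hiap : IsNonanticipative iap) (p : Coord M) :
    IsKernelAt p (factor σ γ iap (ofLex p).1 (ofLex p).2 ∘ equivPi.symm) := by
  obtain ⟨⟨s, hs⟩, c⟩ := p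
  have hp : toLex (⟨s, hs⟩, c) = coord M s c := by simp [coord, idx, hs]
  change IsKernelAt (toLex (⟨s, hs⟩, c)) (factor σ γ iap s c ∘ equivPi.symm)
  rw [hp]
  refine ⟨dependsOn_factor σ γ hiap hs c, fun x => ?_⟩
  rcases le_or_gt c 2 with hc | hc
  exacts [sum_factor_update_of_le_two σ γ hs hc x, sum_factor_update_of_two_lt σ γ hiap hs hc x]

end Kernel

theorem factor_eq_of_ga_eq (σ : TeamStrategy M) {A : Type _} {γ₁ γ₂ : AdvStrategy M A}
    (iap : ℕ → Traj M → A) {t : ℕ} (ht : t < M.T) (hγ : ∀ s < t, γ₁.ga s = γ₂.ga s)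
    {p : Coord M} (hp : p < coord M t 9) :
    factor σ γ₁ iap (ofLex p).1 (ofLex p).2 = factor σ γ₂ iap (ofLex p).1 (ofLex p).2 := by
  obtain ⟨⟨s, hs⟩, c⟩ := p
  change toLex (⟨s, hs⟩, c) < toLex (idx M t, 9) at hp
  have hst : s < t ∨ s = t ∧ c < 9 := by
    simpa [idx, ht, Prod.Lex.toLex_lt_toLex] using hp
  change factor σ γ₁ iap s c = factor σ γ₂ iap s c
  funext ω
  fin_cases c <;> simp only [Fin.reduceFinMk, Fin.zero_eta, Fin.mk_one] at hst ⊢ <;>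
    rcases s with _ | s <;> simp only [factor] <;> rw [hγ _ (by simpa using hst)]

theorem pr_eq_of_ga_eq_before (σ : TeamStrategy M) {A : Type _} {γ₁ γ₂ : AdvStrategy M A}
    {iap : ℕ → Traj M → A} (hiap : IsNonanticipative iap) {t : ℕ} (ht : t < M.T)
    (hγ : ∀ s < t, γ₁.ga s = γ₂.ga s) {P : Traj M → Prop}
    (hP : DependsOn (P ∘ equivPi.symm) (Set.Iio (coord M t 9))) :
    pr σ γ₁ iap P = pr σ γ₂ iap P := by
  have hg : DependsOn (fun x => if P (equivPi.symm x) then (1 : ℝ) else 0)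
      (Set.Iio (coord M t 9)) :=
    fun x y h => by simp only [show P (equivPi.symm x) = P (equivPi.symm y) from hP h]
  have h := sum_mul_prod_eq_of_eqOn_Iio (coord M t 9) hg (isKernelAt_factor σ γ₁ hiap)
    (isKernelAt_factor σ γ₂ hiap)
    fun p hp => congrArg (· ∘ equivPi.symm) (factor_eq_of_ga_eq σ iap ht hγ hp)
  simp only [pr, prob_eq_prod_factor]
  rw [← equivPi.symm.sum_comp, ← equivPi.symm.sum_comp]
  simpa only [comp_apply, boole_mul] using h

def AdvStrategy.switch {A : Type _} (t : ℕ) (γ₁ γ₂ : AdvStrategy M A) : AdvStrategy M A where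
  ga s a u := if s < t then γ₁.ga s a u else γ₂.ga s a u
  ga_nonneg s a u := by
    split_ifs
    exacts [γ₁.ga_nonneg s a u, γ₂.ga_nonneg s a u]
  ga_sum s a := by
    split_ifs
    exacts [γ₁.ga_sum s a, γ₂.ga_sum s a]

theorem prob_eq_mul_prob_switch (σ : TeamStrategy M) {A : Type _} (γ : AdvStrategy M A)
    (iap : ℕ → Traj M → A) {t : ℕ} (ht : t ≤ M.T) (us : List M.Ua) (a : ℕ → A) {ω : Traj M}
    (hω : ∀ s < t, iap s ω = a s ∧ UAv ω s = us.getD s (Classical.arbitrary M.Ua)) :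
    prob σ γ iap ω = (∏ s ∈ range t, γ.ga s (a s) (us.getD s (Classical.arbitrary M.Ua))) *
      prob σ ((openLoop M A us).switch t γ) iap ω := by
  have hpast : ∏ s ∈ range t, γ.ga s (iap s ω) (UAv ω s) =
      ∏ s ∈ range t, γ.ga s (a s) (us.getD s (Classical.arbitrary M.Ua)) :=
    prod_congr rfl fun s hs => by rw [(hω s (mem_range.mp hs)).1, (hω s (mem_range.mp hs)).2]
  have hopen : ∏ s ∈ range t, ((openLoop M A us).switch t γ).ga s (iap s ω) (UAv ω s) = 1 :=
    prod_eq_one fun s hs => by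
      simp [AdvStrategy.switch, openLoop, mem_range.mp hs, (hω s (mem_range.mp hs)).2]
  have hfuture : ∏ s ∈ Ico t M.T, ((openLoop M A us).switch t γ).ga s (iap s ω) (UAv ω s) =
      ∏ s ∈ Ico t M.T, γ.ga s (iap s ω) (UAv ω s) :=
    prod_congr rfl fun s hs => if_neg (not_lt.mpr (mem_Ico.mp hs).1)
  simp only [prob, prod_mul_distrib]
  rw [← prod_range_mul_prod_Ico (fun s => γ.ga s (iap s ω) (UAv ω s)) ht,
    ← prod_range_mul_prod_Ico
      (fun s => ((openLoop M A us).switch t γ).ga s (iap s ω) (UAv ω s)) ht,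
    hpast, hopen, hfuture]
  ring

def truncCom (s : ℕ) (ι : HistC M) : HistC M :=
  (ι.1.take (s + 1), ι.2.1.take (s + 1), ι.2.2.1.take (s + 1), ι.2.2.2.1.take s,
    ι.2.2.2.2.take (s + 1))

theorem teamComP_eq_truncCom_teamCom {s t : ℕ} (h : s < t) (ω : Traj M) :
    teamComP s ω = truncCom s (teamCom t ω) := by
  simp only [teamComP, teamCom, truncCom, pre_take (show s + 1 ≤ t + 1 by omega),
    pre_take (show s + 1 ≤ t by omega), pre_take (show s ≤ t by omega)]

theorem teamComP_eq_truncCom_teamComP {s t : ℕ} (h : s < t) (ω : Traj M) :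
    teamComP s ω = truncCom s (teamComP t ω) := by
  simp only [teamComP, truncCom, pre_take (show s + 1 ≤ t + 1 by omega),
    pre_take (show s ≤ t by omega)]

def AdvHistoryBefore (t : ℕ) (ι : HistC M) (ω : Traj M) : Prop :=
  ∀ s < t, teamComP s ω = truncCom s ι ∧ UAv ω s = ι.2.2.2.1.getD s (Classical.arbitrary M.Ua)

theorem advHistoryBefore_of_teamCom_eq {t : ℕ} {ι : HistC M} {ω : Traj M}
    (h : teamCom t ω = ι) : AdvHistoryBefore t ι ω := by
  subst h
  exact fun s hs => ⟨teamComP_eq_truncCom_teamCom hs ω, (pre_getD hs _).symm⟩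

theorem advHistoryBefore_of_teamComP_eq {t : ℕ} {ι : HistC M} {ω : Traj M}
    (h : teamComP t ω = ι) : AdvHistoryBefore t ι ω := by
  subst h
  exact fun s hs => ⟨teamComP_eq_truncCom_teamComP hs ω, (pre_getD hs _).symm⟩

noncomputable def advWeight (γ : AdvStrategy M (HistC M)) (t : ℕ) (ι : HistC M) : ℝ :=
  ∏ s ∈ range t, γ.ga s (truncCom s ι) (ι.2.2.2.1.getD s (Classical.arbitrary M.Ua))

theorem pr_eq_advWeight_mul_pr_advOpen (σ : TeamStrategy M) (γ : AdvStrategy M (HistC M))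
    {t : ℕ} (ht : t < M.T) (ι : HistC M) {P : Traj M → Prop}
    (hP : DependsOn (P ∘ equivPi.symm) (Set.Iio (coord M t 9)))
    (hPι : ∀ ω, P ω → AdvHistoryBefore t ι ω) :
    pr σ γ teamComP P = advWeight γ t ι * pr σ (advOpen M ι) teamComP P := by
  have hswitch : pr σ γ teamComP P =
      advWeight γ t ι * pr σ ((advOpen M ι).switch t γ) teamComP P := by
    simp only [pr, mul_sum, mul_ite, mul_zero]
    refine sum_congr rfl fun ω _ => ?_
    split_ifs with hω
    · exact prob_eq_mul_prob_switch σ γ teamComP ht.le _ _ (hPι ω hω)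
    · rfl
  rw [hswitch, pr_eq_of_ga_eq_before σ isNonanticipative_teamComP ht (fun s hs => ?_) hP]
  funext a u
  exact if_pos hs

theorem cpr_eq_of_pr_eq_mul (σ : TeamStrategy M) {A A' : Type _} {γ : AdvStrategy M A}
    {γ' : AdvStrategy M A'} {iap : ℕ → Traj M → A} {iap' : ℕ → Traj M → A'}
    {E F : Traj M → Prop} {w : ℝ} (hw : 0 ≤ w) (hE : pr σ γ iap E = w * pr σ γ' iap' E)
    (hFE : pr σ γ iap (fun ω => F ω ∧ E ω) = w * pr σ γ' iap' (fun ω => F ω ∧ E ω))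
    (hpos : 0 < pr σ γ iap E) :
    0 < pr σ γ' iap' E ∧ cpr σ γ iap E F = cpr σ γ' iap' E F := by
  have hw' : w ≠ 0 := by
    rintro rfl
    rw [hE, zero_mul] at hpos
    exact lt_irrefl 0 hpos
  exact ⟨pos_of_mul_pos_right (hE ▸ hpos) hw, by rw [cpr, cpr, hE, hFE, mul_div_mul_left _ _ hw']⟩

section Events

variable {t : ℕ} (ι : HistC M)

theorem dependsOn_teamCom_eq (ht : t < M.T) :
    DependsOn ((fun ω => teamCom t ω = ι) ∘ equivPi.symm) (Set.Iio (coord M t 9)) :=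
  fun x y h => by
    have hE : teamCom t (equivPi.symm x) = teamCom t (equivPi.symm y) :=
      teamCom_congr ht fun q hq => h q (lt_of_le_of_lt hq (coord_lt_coord ht (by omega)))
    simp only [comp_apply, hE]

theorem dependsOn_teamComP_eq (ht : t < M.T) :
    DependsOn ((fun ω => teamComP t ω = ι) ∘ equivPi.symm) (Set.Iio (coord M t 9)) :=
  fun x y h => by
    have hE : teamComP t (equivPi.symm x) = teamComP t (equivPi.symm y) :=
      isNonanticipative_teamComP t ht h
    simp only [comp_apply, hE]

theorem dependsOn_commEvent (ht : t < M.T) (ξ1 : List M.X1) (ξ2 : List M.X2)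
    (υ1 : List M.U1) (υ2 : List M.U2) (mt : Bool × Bool) :
    DependsOn ((fun ω => (pre (t+1) (X1v ω) = ξ1 ∧ pre (t+1) (X2v ω) = ξ2 ∧
      pre t (U1v ω) = υ1 ∧ pre t (U2v ω) = υ2 ∧ Mv ω t = mt) ∧ teamCom t ω = ι) ∘ equivPi.symm)
      (Set.Iio (coord M t 9)) := fun x y h => by
  have hle : ∀ q ≤ coord M t 8, x q = y q :=
    fun q hq => h q (lt_of_le_of_lt hq (coord_lt_coord ht (by omega)))
  have hX1 : pre (t+1) (X1v (equivPi.symm x)) = pre (t+1) (X1v (equivPi.symm y)) :=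
    pre_congr fun r hr => apply_coord_eq_of_le ht hle (by omega)
  have hX2 : pre (t+1) (X2v (equivPi.symm x)) = pre (t+1) (X2v (equivPi.symm y)) :=
    pre_congr fun r hr => apply_coord_eq_of_le ht hle (by omega)
  have hU1 : pre t (U1v (equivPi.symm x)) = pre t (U1v (equivPi.symm y)) :=
    pre_congr fun r hr => apply_coord_eq_of_le ht hle (by omega)
  have hU2 : pre t (U2v (equivPi.symm x)) = pre t (U2v (equivPi.symm y)) :=
    pre_congr fun r hr => apply_coord_eq_of_le ht hle (by omega)
  have hM : Mv (equivPi.symm x) t = Mv (equivPi.symm y) t :=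
    Prod.ext (apply_coord_eq_of_le ht hle (by omega)) (apply_coord_eq_of_le ht hle (by omega))
  have hE : teamCom t (equivPi.symm x) = teamCom t (equivPi.symm y) :=
    teamCom_congr ht fun q hq => hle q (hq.trans (coord_le_coord ht (by omega)))
  simp only [comp_apply, hX1, hX2, hU1, hU2, hM, hE]

theorem dependsOn_ctrlEvent (ht : t < M.T) (ξ1 : List M.X1) (ξ2 : List M.X2)
    (υ1 : List M.U1) (υ2 : List M.U2) :
    DependsOn ((fun ω => (pre (t+1) (X1v ω) = ξ1 ∧ pre (t+1) (X2v ω) = ξ2 ∧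
      pre (t+1) (U1v ω) = υ1 ∧ pre (t+1) (U2v ω) = υ2) ∧ teamComP t ω = ι) ∘ equivPi.symm)
      (Set.Iio (coord M t 9)) := fun x y h => by
  have hle : ∀ q ≤ coord M t 8, x q = y q :=
    fun q hq => h q (lt_of_le_of_lt hq (coord_lt_coord ht (by omega)))
  have hX1 : pre (t+1) (X1v (equivPi.symm x)) = pre (t+1) (X1v (equivPi.symm y)) :=
    pre_congr fun r hr => apply_coord_eq_of_le ht hle (by omega)
  have hX2 : pre (t+1) (X2v (equivPi.symm x)) = pre (t+1) (X2v (equivPi.symm y)) :=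
    pre_congr fun r hr => apply_coord_eq_of_le ht hle (by omega)
  have hU1 : pre (t+1) (U1v (equivPi.symm x)) = pre (t+1) (U1v (equivPi.symm y)) :=
    pre_congr fun r hr => apply_coord_eq_of_le ht hle (by omega)
  have hU2 : pre (t+1) (U2v (equivPi.symm x)) = pre (t+1) (U2v (equivPi.symm y)) :=
    pre_congr fun r hr => apply_coord_eq_of_le ht hle (by omega)
  have hE : teamComP t (equivPi.symm x) = teamComP t (equivPi.symm y) :=
    isNonanticipative_teamComP t ht h
  simp only [comp_apply, hX1, hX2, hU1, hU2, hE]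

end Events

/-- Lemma 3 of the appendix: in the maximal-information structure
(`Iᵃ_t = I¹_t ∩ I²_t = C^team_t`, `Iᵃ_{t⁺} = C^team_{t⁺}`), for a fixed team strategy `σ`
and *any* adversary strategy `γ`, the conditional distribution of
`(X_{1:t}, U_{1:t-1}, M_t)` given `Iᵃ_t` equals `Ψ_t`, and the conditional distribution of
`(X_{1:t}, U_{1:t})` given `Iᵃ_{t⁺}` equals `Ψ_{t⁺}`, almost surely; in particular these
conditional distributions do not depend on the adversary's strategy. -/
theorem lemma3_appendix (M : Model) (σ : TeamStrategy M) (γ : AdvStrategy M (HistC M))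
    (t : ℕ) (ht : t < M.T) (ι : HistC M)
    (ξ1 : List M.X1) (ξ2 : List M.X2) (υ1 : List M.U1) (υ2 : List M.U2)
    (mt : Bool × Bool) :
    (0 < pr σ γ teamComP (fun ω => teamCom t ω = ι) →
      cpr σ γ teamComP (fun ω => teamCom t ω = ι)
          (fun ω => pre (t+1) (X1v ω) = ξ1 ∧ pre (t+1) (X2v ω) = ξ2 ∧
                    pre t (U1v ω) = υ1 ∧ pre t (U2v ω) = υ2 ∧ Mv ω t = mt)
        = Psi σ t ι ξ1 ξ2 υ1 υ2 mt) ∧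
    (0 < pr σ γ teamComP (fun ω => teamComP t ω = ι) →
      cpr σ γ teamComP (fun ω => teamComP t ω = ι)
          (fun ω => pre (t+1) (X1v ω) = ξ1 ∧ pre (t+1) (X2v ω) = ξ2 ∧
                    pre (t+1) (U1v ω) = υ1 ∧ pre (t+1) (U2v ω) = υ2)
        = PsiP σ t ι ξ1 ξ2 υ1 υ2) := by
  have hw : 0 ≤ advWeight γ t ι := prod_nonneg fun s _ => γ.ga_nonneg _ _ _
  constructor
  · intro hpos
    obtain ⟨hpos', hcpr⟩ := cpr_eq_of_pr_eq_mul σ hw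
      (pr_eq_advWeight_mul_pr_advOpen σ γ ht ι (dependsOn_teamCom_eq ι ht)
        fun _ hω => advHistoryBefore_of_teamCom_eq hω)
      (pr_eq_advWeight_mul_pr_advOpen σ γ ht ι (dependsOn_commEvent ι ht ξ1 ξ2 υ1 υ2 mt)
        fun _ hω => advHistoryBefore_of_teamCom_eq hω.2) hpos
    rw [hcpr, Psi, if_pos hpos']
  · intro hpos
    obtain ⟨hpos', hcpr⟩ := cpr_eq_of_pr_eq_mul σ hw
      (pr_eq_advWeight_mul_pr_advOpen σ γ ht ι (dependsOn_teamComP_eq ι ht)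
        fun _ hω => advHistoryBefore_of_teamComP_eq hω)
      (pr_eq_advWeight_mul_pr_advOpen σ γ ht ι (dependsOn_ctrlEvent ι ht ξ1 ξ2 υ1 υ2)
        fun _ hω => advHistoryBefore_of_teamComP_eq hω.2) hpos
    rw [hcpr, PsiP, if_pos hpos']

end TA
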